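/- Let L be an atomic lattice with bottom element 0̂, and let β ∈ L be neither the bottom element nor an atom. Let β₁,…,β_t be all the elements of L covered by β. Then t ≥ 2, for any i ≠ j we have β = β_i ∨ β_j, and A_β = A_{β₁} ∪ ⋯ ∪ A_{β_t}. -/

import Mathlib

/-!
Since `L` is finite, everything strictly below `β` lies under some element covered by `β`; this
gives the union formula once we know that no atom equals `β`. Two distinct covers of `β` join to
`β`. For `t ≥ 2`: `⊥ < β` gives a first cover `γ`; as `β` is a join of atoms and `γ < β`, some atom
below `β` is not below `γ`, and any cover of `β` above that atom differs from `γ`.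
-/

section CovBy

variable {L : Type*}

theorem exists_covBy_ne_of_covBy_sup [Lattice L] [OrderBot L] [IsStronglyCoatomic L]
    {ι : Type*} {s : Finset ι} {f : ι → L} (hf : ∀ i ∈ s, f i < s.sup f) {γ : L}
    (hγ : γ ⋖ s.sup f) : ∃ δ, δ ⋖ s.sup f ∧ δ ≠ γ := by
  obtain ⟨k, hk, hkγ⟩ : ∃ k ∈ s, ¬ f k ≤ γ := by
    by_contra! h
    exact hγ.lt.not_ge (Finset.sup_le h)
  obtain ⟨δ, hkδ, hδ⟩ := exists_le_covBy_of_lt (hf k hk)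
  exact ⟨δ, hδ, fun hδγ => hkγ (hδγ ▸ hkδ)⟩

theorem one_lt_ncard_covBy_sup [Lattice L] [OrderBot L] [Finite L]
    {ι : Type*} {s : Finset ι} {f : ι → L} (hf : ∀ i ∈ s, f i < s.sup f)
    (hne : s.sup f ≠ ⊥) : 1 < {γ : L | γ ⋖ s.sup f}.ncard := by
  obtain ⟨γ, -, hγ⟩ := exists_le_covBy_of_lt (bot_lt_iff_ne_bot.mpr hne)
  obtain ⟨δ, hδ, hδγ⟩ := exists_covBy_ne_of_covBy_sup hf hγ
  exact (Set.one_lt_ncard_iff (Set.toFinite _)).mpr ⟨δ, _, hδ, hγ, hδγ⟩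

end CovBy

theorem covBy_structure {L : Type*} [Lattice L] [OrderBot L] [Fintype L] {r : ℕ}
    (a : Fin r → L) (hatom : ∀ i, IsAtom (a i))
    (hgen : ∀ x : L, ∃ s : Finset (Fin r), x = s.sup a)
    (β : L) (hb : β ≠ ⊥) (hna : ¬ IsAtom β) :
    2 ≤ {γ : L | γ ⋖ β}.ncard ∧
    (∀ γ δ : L, γ ⋖ β → δ ⋖ β → γ ≠ δ → γ ⊔ δ = β) ∧
    {i : Fin r | a i ≤ β} = ⋃ γ ∈ {γ : L | γ ⋖ β}, {i : Fin r | a i ≤ γ} := by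
  have hlt : ∀ i, a i ≤ β → a i < β := fun i hi => hi.lt_of_ne fun h => hna (h ▸ hatom i)
  obtain ⟨s, rfl⟩ := hgen β
  refine ⟨one_lt_ncard_covBy_sup (fun i hi => hlt i (Finset.le_sup hi)) hb,
    fun γ δ hγ hδ hne => hγ.wcovBy.sup_eq hδ.wcovBy hne, ?_⟩
  ext i
  simp only [Set.mem_ofPred_eq, Set.mem_iUnion, exists_prop]
  exact ⟨fun hi => (exists_le_covBy_of_lt (hlt i hi)).imp fun _ => And.symm,
    fun ⟨_, hγ, hi⟩ => hi.trans hγ.le⟩
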